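/- Let A be an abelian group and let D = Dih(A) be the generalized dihedral group on A with distinguished involution x. Let S ⊆ D be closed under inversion, not contain the identity, and suppose that S ∩ xA contains exactly one element y. Then for every a ∈ A, y·a ∈ S ∩ xA if and only if y·a⁻¹ ∈ S ∩ xA; in particular, the Cayley graph Cay(D, S) is also a Cayley graph on the abelian group A × C₂. -/

import Mathlib

/-- The generalized dihedral group `Dih(A)` on an abelian group `A`:
elements `r a` form the copy of `A`, and `sr a = x * r a` lie in the coset `xA`,
where `x = sr 1` is the distinguished involution inverting `A`. -/
inductive GenDihedral (A : Type*) : Type _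
  | r : A → GenDihedral A
  | sr : A → GenDihedral A

namespace GenDihedral

variable {A : Type*} [CommGroup A]

instance : One (GenDihedral A) := ⟨r 1⟩

instance : Inv (GenDihedral A) :=
  ⟨fun g => match g with
    | r a => r a⁻¹
    | sr a => sr a⟩

instance : Mul (GenDihedral A) :=
  ⟨fun g h => match g, h with
    | r a, r b => r (a * b)
    | r a, sr b => sr (b * a⁻¹)
    | sr a, r b => sr (a * b)
    | sr a, sr b => r (b * a⁻¹)⟩

@[simp] theorem r_mul_r (a b : A) : r a * r b = r (a * b) := rfl
@[simp] theorem r_mul_sr (a b : A) : r a * sr b = sr (b * a⁻¹) := rfl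
@[simp] theorem sr_mul_r (a b : A) : sr a * r b = sr (a * b) := rfl
@[simp] theorem sr_mul_sr (a b : A) : sr a * sr b = r (b * a⁻¹) := rfl
@[simp] theorem one_def : (1 : GenDihedral A) = r 1 := rfl
@[simp] theorem inv_r (a : A) : (r a)⁻¹ = r a⁻¹ := rfl
@[simp] theorem inv_sr (a : A) : (sr a)⁻¹ = sr a := rfl

instance : Group (GenDihedral A) :=
  Group.ofLeftAxioms
    (by rintro (a | a) (b | b) (c | c) <;>
      simp [mul_assoc, mul_comm, mul_left_comm])
    (by rintro (a | a) <;> simp)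
    (by rintro (a | a) <;> simp)

/-- The canonical embedding of `A` into `Dih(A)`. -/
def rHom : A →* GenDihedral A where
  toFun := r
  map_one' := rfl
  map_mul' _ _ := rfl

/-- The distinguished involution `x` of `Dih(A)`, inverting `A` by conjugation. -/
def x (A : Type*) [CommGroup A] : GenDihedral A := sr (1 : A)

/-- The coset `xA` of `A` in `Dih(A)`, i.e. the elements of `Dih(A)` outside `A`. -/
def xA (A : Type*) [CommGroup A] : Set (GenDihedral A) :=
  {z : GenDihedral A | ∃ a : A, z = x A * rHom a}

end GenDihedral

/-- The Cayley graph `Cay(G, S)` of a group `G` with inverse-closed, identity-free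
connection set `S`: vertices `u` and `v` are adjacent iff `v = s * u` for some `s ∈ S`,
i.e. iff `v * u⁻¹ ∈ S`. -/
def cayleyGraph {G : Type*} [Group G] (S : Set G) (hsym : ∀ s ∈ S, s⁻¹ ∈ S)
    (hid : (1 : G) ∉ S) : SimpleGraph G where
  Adj u v := v * u⁻¹ ∈ S
  symm := by
    constructor
    intro u v h
    simpa [mul_inv_rev] using hsym _ h
  loopless := by
    constructor
    intro u h
    exact hid (by simpa using h)

/-!
Write `y = sr b`. Conjugation by `sr b` preserves `S`: it inverts `A`, under which `S` is closed,
and it fixes `sr b`, the only element of `S` outside `A`. Hence left multiplication by `sr b` and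
right multiplication by elements of `A` are automorphisms of `Cay(Dih(A), S)`. They commute, so
together they form an image of `A × C₂`, and this group acts regularly because every element of
`Dih(A)` is uniquely of the form `(sr b)ᵗ * u * r a` for a fixed `u`.
-/

section CayleyGraph

variable {G : Type*} [Group G] {S : Set G} {hsym : ∀ s ∈ S, s⁻¹ ∈ S} {hid : (1 : G) ∉ S}

theorem cayleyGraph_adj_mul_right_iff (g u v : G) :
    (cayleyGraph S hsym hid).Adj (u * g) (v * g) ↔ (cayleyGraph S hsym hid).Adj u v := by
  show v * g * (u * g)⁻¹ ∈ S ↔ v * u⁻¹ ∈ S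
  rw [mul_inv_rev, mul_assoc, mul_inv_cancel_left]

theorem cayleyGraph_adj_mul_left_iff {z : G} (hz : ∀ s, z * s * z⁻¹ ∈ S ↔ s ∈ S) (u v : G) :
    (cayleyGraph S hsym hid).Adj (z * u) (z * v) ↔ (cayleyGraph S hsym hid).Adj u v := by
  show z * v * (z * u)⁻¹ ∈ S ↔ v * u⁻¹ ∈ S
  rw [← hz (v * u⁻¹), mul_inv_rev, mul_assoc, mul_assoc, mul_assoc]

end CayleyGraph

section RegularPermGroup

variable {K X : Type*} [Group K] (φ : K →* Equiv.Perm X)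

theorem MonoidHom.injective_of_existsUnique_apply_eq (x : X) (h : ∀ v, ∃! k, φ k x = v) :
    Function.Injective φ := fun k k' hkk' =>
  (h (φ k x)).unique rfl (by rw [hkk'])

theorem MonoidHom.range_existsUnique_apply_eq (h : ∀ u v : X, ∃! k, φ k u = v) (u v : X) :
    ∃! g : φ.range, (g : Equiv.Perm X) u = v := by
  obtain ⟨k, hk, hunique⟩ := h u v
  refine ⟨⟨φ k, k, rfl⟩, hk, ?_⟩
  rintro ⟨_, k', rfl⟩ hk'
  exact Subtype.ext (congrArg φ (hunique k' hk'))

end RegularPermGroup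

theorem Multiplicative.zmod_two_eq_one_or_eq_ofAdd_one (t : Multiplicative (ZMod 2)) :
    t = 1 ∨ t = ofAdd 1 := by
  revert t; decide

def involutionHom {M : Type*} [Monoid M] (g : M) (hg : g * g = 1) :
    Multiplicative (ZMod 2) →* M where
  toFun t := if t = 1 then 1 else g
  map_one' := if_pos rfl
  map_mul' s t := by
    have hsq : (.ofAdd 1 * .ofAdd 1 : Multiplicative (ZMod 2)) = 1 := by decide
    have hne : (.ofAdd 1 : Multiplicative (ZMod 2)) ≠ 1 := by decide
    rcases s.zmod_two_eq_one_or_eq_ofAdd_one with rfl | rfl <;>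
      rcases t.zmod_two_eq_one_or_eq_ofAdd_one with rfl | rfl <;> simp [hsq, hne, hg]

@[simp]
theorem involutionHom_ofAdd_one {M : Type*} [Monoid M] (g : M) (hg : g * g = 1) :
    involutionHom g hg (.ofAdd 1) = g := by
  simp only [involutionHom, MonoidHom.coe_mk, OneHom.coe_mk]
  exact if_neg (by decide)

namespace GenDihedral

variable {A : Type*} [CommGroup A]

theorem x_mul_rHom (a : A) : x A * rHom a = sr a := by simp [x, rHom]

theorem mem_xA_iff {z : GenDihedral A} : z ∈ xA A ↔ ∃ b, z = sr b := by
  simp only [xA, x_mul_rHom, Set.mem_ofPred_eq]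

theorem sr_mul_self (b : A) : sr b * sr b = 1 := by simp

section ConnectionSet

variable {S : Set (GenDihedral A)} {b : A}

theorem sr_mem_iff (hS : S ∩ xA A = {sr b}) (d : A) : sr d ∈ S ↔ d = b := by
  have hd : sr d ∈ xA A := mem_xA_iff.2 ⟨d, rfl⟩
  rw [← sr.injEq, ← Set.mem_singleton_iff, ← hS]
  exact ⟨fun h => ⟨h, hd⟩, And.left⟩

theorem sr_mul_mul_inv_mem_iff (hsym : ∀ s ∈ S, s⁻¹ ∈ S) (hS : S ∩ xA A = {sr b})
    (s : GenDihedral A) : sr b * s * (sr b)⁻¹ ∈ S ↔ s ∈ S := by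
  rcases s with e | e
  · have hconj : sr b * r e * (sr b)⁻¹ = (r e)⁻¹ := by simp
    rw [hconj]
    exact ⟨fun h => inv_inv (r e) ▸ hsym _ h, hsym _⟩
  · have hconj : sr b * sr e * (sr b)⁻¹ = sr (b * (e * b⁻¹)⁻¹) := by simp
    rw [hconj, sr_mem_iff hS, sr_mem_iff hS, mul_eq_left, inv_eq_one, mul_inv_eq_one]

end ConnectionSet

/-- `(a, t)` acts by `u ↦ (sr b)ᵗ * u * r a`. -/
def regularHom (b : A) : A × Multiplicative (ZMod 2) →* Equiv.Perm (GenDihedral A) :=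
  MonoidHom.noncommCoprod
    ((MulAction.toPermHom _ _).comp
      (rHom.toOpposite fun a a' => (Commute.all a a').map rHom))
    ((MulAction.toPermHom _ _).comp (involutionHom (sr b) (sr_mul_self b)))
    fun _ _ => Equiv.ext fun _ => smul_comm _ _ _

theorem regularHom_apply (b a : A) (t : Multiplicative (ZMod 2)) (u : GenDihedral A) :
    regularHom b (a, t) u = involutionHom (sr b) (sr_mul_self b) t * u * r a := by
  simp [regularHom, MonoidHom.noncommCoprod_apply, rHom]

theorem eq_one_of_regularHom_apply_eq_self {b : A} {k : A × Multiplicative (ZMod 2)}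
    {u : GenDihedral A} (h : regularHom b k u = u) : k = 1 := by
  obtain ⟨a, t⟩ := k
  rcases t.zmod_two_eq_one_or_eq_ofAdd_one with rfl | rfl
  · rw [regularHom_apply, map_one, one_mul, mul_eq_left, one_def, r.injEq] at h
    rw [h, Prod.mk_one_one]
  · rcases u with c | c <;> simp [regularHom_apply] at h

theorem existsUnique_regularHom_apply_eq (b : A) (u v : GenDihedral A) :
    ∃! k, regularHom b k u = v := by
  obtain ⟨k, hk⟩ : ∃ k, regularHom b k u = v := by
    rcases u with c | c <;> rcases v with d | d
    · exact ⟨(c⁻¹ * d, 1), by simp [regularHom_apply]⟩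
    · refine ⟨((b * c)⁻¹ * d, .ofAdd 1), ?_⟩
      simp only [regularHom_apply, involutionHom_ofAdd_one, sr_mul_r, mul_inv_cancel_left]
    · refine ⟨((c * b⁻¹)⁻¹ * d, .ofAdd 1), ?_⟩
      simp only [regularHom_apply, involutionHom_ofAdd_one, sr_mul_sr, r_mul_r,
        mul_inv_cancel_left]
    · exact ⟨(c⁻¹ * d, 1), by simp [regularHom_apply]⟩
  refine ⟨k, hk, fun k' hk' => ?_⟩
  have hfix : regularHom b (k⁻¹ * k') u = u := by
    rw [map_mul, Equiv.Perm.mul_apply, hk', ← hk, ← Equiv.Perm.mul_apply, ← map_mul,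
      inv_mul_cancel, map_one, Equiv.Perm.one_apply]
  exact (inv_mul_eq_one.mp (eq_one_of_regularHom_apply_eq_self hfix)).symm

theorem cayleyGraph_adj_regularHom_iff {S : Set (GenDihedral A)} {b : A}
    (hsym : ∀ s ∈ S, s⁻¹ ∈ S) (hid : (1 : GenDihedral A) ∉ S) (hS : S ∩ xA A = {sr b})
    (k : A × Multiplicative (ZMod 2)) (u v : GenDihedral A) :
    (cayleyGraph S hsym hid).Adj (regularHom b k u) (regularHom b k v) ↔
      (cayleyGraph S hsym hid).Adj u v := by
  obtain ⟨a, t⟩ := k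
  rw [regularHom_apply, regularHom_apply, cayleyGraph_adj_mul_right_iff,
    cayleyGraph_adj_mul_left_iff]
  rcases t.zmod_two_eq_one_or_eq_ofAdd_one with rfl | rfl
  · simp only [map_one, one_mul, inv_one, mul_one, implies_true]
  · simpa using sr_mul_mul_inv_mem_iff hsym hS

end GenDihedral

/-- If the connection set `S ⊆ Dih(A)` is inverse-closed, identity-free, and meets the
coset `xA` in exactly the single element `y`, then `y * a ∈ S ∩ xA ↔ y * a⁻¹ ∈ S ∩ xA`
for all `a ∈ A`, and consequently `Cay(Dih(A), S)` is also a Cayley graph on the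
abelian group `A × C₂` (its automorphism group contains a regular subgroup
isomorphic to `A × C₂`). -/
theorem stmt10 {A : Type*} [CommGroup A]
    (S : Set (GenDihedral A)) (hsym : ∀ s ∈ S, s⁻¹ ∈ S) (hid : (1 : GenDihedral A) ∉ S)
    (y : GenDihedral A) (hyS : S ∩ GenDihedral.xA A = {y}) :
    (∀ a : A, y * GenDihedral.rHom a ∈ S ∩ GenDihedral.xA A ↔
      y * (GenDihedral.rHom a)⁻¹ ∈ S ∩ GenDihedral.xA A) ∧
    ∃ H : Subgroup (Equiv.Perm (GenDihedral A)),
      (∀ g ∈ H, ∀ u v : GenDihedral A,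
        (cayleyGraph S hsym hid).Adj (g u) (g v) ↔ (cayleyGraph S hsym hid).Adj u v) ∧
      Nonempty (H ≃* A × Multiplicative (ZMod 2)) ∧
      (∀ u v : GenDihedral A, ∃! g : H, (g : Equiv.Perm (GenDihedral A)) u = v) := by
  refine ⟨fun a => ?_, ?_⟩
  · simp only [hyS, Set.mem_singleton_iff, mul_eq_left, inv_eq_one]
  have hy : y ∈ S ∩ GenDihedral.xA A := hyS ▸ Set.mem_singleton y
  obtain ⟨b, rfl⟩ := GenDihedral.mem_xA_iff.1 hy.2
  have hregular := GenDihedral.existsUnique_regularHom_apply_eq b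
  refine ⟨(GenDihedral.regularHom b).range, ?_, ?_,
    (GenDihedral.regularHom b).range_existsUnique_apply_eq hregular⟩
  · rintro _ ⟨k, rfl⟩ u v
    exact GenDihedral.cayleyGraph_adj_regularHom_iff hsym hid hyS k u v
  · exact ⟨(MonoidHom.ofInjective
      ((GenDihedral.regularHom b).injective_of_existsUnique_apply_eq 1 (hregular 1))).symm⟩
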